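/- arXiv:0806.0601 — 5 statements merged into one kernel-verified Lean document; each statement's English description precedes it below -/
import Mathlib

section
/- Given a chain map f : A → C and a strong deformation retract r : B → C with inverse i and homotopy h, the mapping cone C(i∘f) is chain homotopy equivalent to the mapping cone C(f), via the maps (1,0;0,i) : C(f) → C(if) and (1,0;0,r) : C(if) → C(f). -/
/-!
Both maps act as the identity on the `A`-summand, so they are chain maps as soon as `i` and `r`
are and `r ∘ (i ∘ f) = f`. Since `r ∘ i = 1`, the composite `Q ∘ P` is the identity on `C(f)`.
On `C(i ∘ f)` the composite `P ∘ Q` is `(1, 0; 0, i ∘ r)`, and `(0, 0; 0, -h)` is a homotopy to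
the identity: the off-diagonal term it produces is `h ∘ i ∘ f`, which vanishes because `h ∘ i = 0`.
-/

namespace MappingCone

variable {A B C : ℤ → Type*} [∀ n, AddCommGroup (A n)] [∀ n, AddCommGroup (B n)]
  [∀ n, AddCommGroup (C n)]

/-- The differential `(d_A, 0; g, -d_C)` of the cone of `g`, whose degree `n` part is
`A (n+1) × C n`. -/
def d (dA : ∀ n, A n →+ A (n+1)) (dC : ∀ n, C n →+ C (n+1)) (g : ∀ n, A n →+ C n) (n : ℤ) :
    (A (n+1) × C n) →+ (A (n+1+1) × C (n+1)) :=
  ((dA (n+1)).comp (AddMonoidHom.fst _ _)).prod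
    (((g (n+1)).comp (AddMonoidHom.fst _ _)) - ((dC n).comp (AddMonoidHom.snd _ _)))

def map (φ : ∀ n, C n →+ B n) (n : ℤ) : (A (n+1) × C n) →+ (A (n+1) × B n) :=
  (AddMonoidHom.fst _ _).prod ((φ n).comp (AddMonoidHom.snd _ _))

def homotopy (h : ∀ n, B (n+1) →+ B n) (n : ℤ) : (A (n+1+1) × B (n+1)) →+ (A (n+1) × B n) :=
  (0 : (A (n+1+1) × B (n+1)) →+ A (n+1)).prod (-(h n).comp (AddMonoidHom.snd _ _))

@[simp]
lemma d_apply (dA : ∀ n, A n →+ A (n+1)) (dC : ∀ n, C n →+ C (n+1)) (g : ∀ n, A n →+ C n)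
    (n : ℤ) (x : A (n+1) × C n) :
    d dA dC g n x = (dA (n+1) x.1, g (n+1) x.1 - dC n x.2) := rfl

@[simp]
lemma map_apply (φ : ∀ n, C n →+ B n) (n : ℤ) (x : A (n+1) × C n) :
    map φ n x = (x.1, φ n x.2) := rfl

@[simp]
lemma homotopy_apply (h : ∀ n, B (n+1) →+ B n) (n : ℤ) (x : A (n+1+1) × B (n+1)) :
    homotopy h n x = (0, -h n x.2) := rfl

theorem map_d_comm {dA : ∀ n, A n →+ A (n+1)} {dB : ∀ n, B n →+ B (n+1)}
    {dC : ∀ n, C n →+ C (n+1)} {g : ∀ n, A n →+ C n} {g' : ∀ n, A n →+ B n}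
    {φ : ∀ n, C n →+ B n} (hφ : ∀ n x, φ (n+1) (dC n x) = dB n (φ n x))
    (hg : ∀ n x, φ n (g n x) = g' n x) (n : ℤ) (x : A (n+1) × C n) :
    map φ (n+1) (d dA dC g n x) = d dA dB g' n (map φ n x) := by
  simp [hφ, hg]

theorem map_map_of_leftInverse {φ : ∀ n, C n →+ B n} {ψ : ∀ n, B n →+ C n}
    (hψφ : ∀ n x, ψ n (φ n x) = x) (n : ℤ) (x : A (n+1) × C n) :
    map ψ n (map φ n x) = x := by
  simp [hψφ]

theorem sub_map_map_eq_d_homotopy_add_homotopy_d {dA : ∀ n, A n →+ A (n+1)}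
    {dB : ∀ n, B n →+ B (n+1)} {g : ∀ n, A n →+ B n} {i : ∀ n, C n →+ B n}
    {r : ∀ n, B n →+ C n} {h : ∀ n, B (n+1) →+ B n}
    (hir : ∀ n x, x - i (n+1) (r (n+1) x) = dB n (h n x) + h (n+1) (dB (n+1) x))
    (hhg : ∀ n x, h n (g (n+1) x) = 0) (n : ℤ) (x : A (n+1+1) × B (n+1)) :
    x - map i (n+1) (map r (n+1) x) =
      d dA dB g n (homotopy h n x) + homotopy h (n+1) (d dA dB g (n+1) x) := by
  ext
  · simp
  · simp [hir, hhg]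

end MappingCone

open MappingCone in
theorem cone_of_if_homotopy_equiv_general
    (A B C : ℤ → Type) [∀ n, AddCommGroup (A n)] [∀ n, AddCommGroup (B n)]
    [∀ n, AddCommGroup (C n)]
    (dA : ∀ n, A n →+ A (n+1)) (dB : ∀ n, B n →+ B (n+1)) (dC : ∀ n, C n →+ C (n+1))
    (f : ∀ n, A n →+ C n)
    (r : ∀ n, B n →+ C n)
    (hr : ∀ n (x : B n), r (n+1) (dB n x) = dC n (r n x))
    (i : ∀ n, C n →+ B n)
    (hi : ∀ n (x : C n), i (n+1) (dC n x) = dB n (i n x))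
    (h : ∀ n, B (n+1) →+ B n)
    (hdr : ∀ n (x : B (n+1)),
      x - i (n+1) (r (n+1) x) = dB n (h n x) + h (n+1) (dB (n+1) x))
    (hri : ∀ n (x : C n), r n (i n x) = x)
    (hhi : ∀ n (x : C (n+1)), h n (i (n+1) x) = 0) :
    -- the cone of f, the cone of i∘f, and the maps (1,0;0,i), (1,0;0,r)
    let dCf : ∀ n : ℤ, (A (n+1) × C n) →+ (A (n+1+1) × C (n+1)) := fun n =>
      ((dA (n+1)).comp (AddMonoidHom.fst (A (n+1)) (C n))).prod
        (((f (n+1)).comp (AddMonoidHom.fst (A (n+1)) (C n)))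
          - ((dC n).comp (AddMonoidHom.snd (A (n+1)) (C n))))
    let dCif : ∀ n : ℤ, (A (n+1) × B n) →+ (A (n+1+1) × B (n+1)) := fun n =>
      ((dA (n+1)).comp (AddMonoidHom.fst (A (n+1)) (B n))).prod
        (((i (n+1)).comp ((f (n+1)).comp (AddMonoidHom.fst (A (n+1)) (B n))))
          - ((dB n).comp (AddMonoidHom.snd (A (n+1)) (B n))))
    let P : ∀ n : ℤ, (A (n+1) × C n) →+ (A (n+1) × B n) := fun n =>
      (AddMonoidHom.fst (A (n+1)) (C n)).prod
        ((i n).comp (AddMonoidHom.snd (A (n+1)) (C n)))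
    let Q : ∀ n : ℤ, (A (n+1) × B n) →+ (A (n+1) × C n) := fun n =>
      (AddMonoidHom.fst (A (n+1)) (B n)).prod
        ((r n).comp (AddMonoidHom.snd (A (n+1)) (B n)))
    -- P and Q are chain maps, and they are mutually inverse up to chain homotopy
    (∀ n (x : A (n+1) × C n), P (n+1) (dCf n x) = dCif n (P n x)) ∧
    (∀ n (x : A (n+1) × B n), Q (n+1) (dCif n x) = dCf n (Q n x)) ∧
    (∃ H : ∀ n : ℤ, (A (n+1+1) × C (n+1)) →+ (A (n+1) × C n),
      ∀ n (x : A (n+1+1) × C (n+1)),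
        x - Q (n+1) (P (n+1) x) = dCf n (H n x) + H (n+1) (dCf (n+1) x)) ∧
    (∃ K : ∀ n : ℤ, (A (n+1+1) × B (n+1)) →+ (A (n+1) × B n),
      ∀ n (x : A (n+1+1) × B (n+1)),
        x - P (n+1) (Q (n+1) x) = dCif n (K n x) + K (n+1) (dCif (n+1) x)) := by
  intro dCf dCif P Q
  refine ⟨map_d_comm (dA := dA) (g := f) (g' := fun n => (i n).comp (f n)) hi (fun _ _ => rfl),
    map_d_comm (dA := dA) (g := fun n => (i n).comp (f n)) (g' := f) hr
      (fun n x => hri n (f n x)),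
    ⟨0, fun n x => ?_⟩,
    ⟨homotopy h, sub_map_map_eq_d_homotopy_add_homotopy_d (dA := dA)
      (g := fun n => (i n).comp (f n)) hdr (fun n x => hhi n (f (n+1) x))⟩⟩
  rw [show Q (n+1) (P (n+1) x) = x from map_map_of_leftInverse hri (n+1) x]
  simp

/-- Lemma (f ↦ if): if `r : B → C` is a strong deformation retract with inverse `i`
and homotopy `h`, and `f : A → C` is a chain map, then the mapping cone `C(i∘f)` is
chain homotopy equivalent to `C(f)` via the maps `(1,0;0,i) : C(f) → C(if)` and
`(1,0;0,r) : C(if) → C(f)`. -/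
theorem cone_of_if_homotopy_equiv
    (A B C : ℤ → Type) [∀ n, AddCommGroup (A n)] [∀ n, AddCommGroup (B n)]
    [∀ n, AddCommGroup (C n)]
    (dA : ∀ n, A n →+ A (n+1)) (dB : ∀ n, B n →+ B (n+1)) (dC : ∀ n, C n →+ C (n+1))
    (hddA : ∀ n (x : A n), dA (n+1) (dA n x) = 0)
    (hddB : ∀ n (x : B n), dB (n+1) (dB n x) = 0)
    (hddC : ∀ n (x : C n), dC (n+1) (dC n x) = 0)
    (f : ∀ n, A n →+ C n)
    (hf : ∀ n (x : A n), f (n+1) (dA n x) = dC n (f n x))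
    (r : ∀ n, B n →+ C n)
    (hr : ∀ n (x : B n), r (n+1) (dB n x) = dC n (r n x))
    (i : ∀ n, C n →+ B n)
    (hi : ∀ n (x : C n), i (n+1) (dC n x) = dB n (i n x))
    (h : ∀ n, B (n+1) →+ B n)
    (hdr : ∀ n (x : B (n+1)),
      x - i (n+1) (r (n+1) x) = dB n (h n x) + h (n+1) (dB (n+1) x))
    (hri : ∀ n (x : C n), r n (i n x) = x)
    (hhi : ∀ n (x : C (n+1)), h n (i (n+1) x) = 0)
    (hrh : ∀ n (x : B (n+1)), r n (h n x) = 0) :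
    -- the cone of f, the cone of i∘f, and the maps (1,0;0,i), (1,0;0,r)
    let dCf : ∀ n : ℤ, (A (n+1) × C n) →+ (A (n+1+1) × C (n+1)) := fun n =>
      ((dA (n+1)).comp (AddMonoidHom.fst (A (n+1)) (C n))).prod
        (((f (n+1)).comp (AddMonoidHom.fst (A (n+1)) (C n)))
          - ((dC n).comp (AddMonoidHom.snd (A (n+1)) (C n))))
    let dCif : ∀ n : ℤ, (A (n+1) × B n) →+ (A (n+1+1) × B (n+1)) := fun n =>
      ((dA (n+1)).comp (AddMonoidHom.fst (A (n+1)) (B n))).prod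
        (((i (n+1)).comp ((f (n+1)).comp (AddMonoidHom.fst (A (n+1)) (B n))))
          - ((dB n).comp (AddMonoidHom.snd (A (n+1)) (B n))))
    let P : ∀ n : ℤ, (A (n+1) × C n) →+ (A (n+1) × B n) := fun n =>
      (AddMonoidHom.fst (A (n+1)) (C n)).prod
        ((i n).comp (AddMonoidHom.snd (A (n+1)) (C n)))
    let Q : ∀ n : ℤ, (A (n+1) × B n) →+ (A (n+1) × C n) := fun n =>
      (AddMonoidHom.fst (A (n+1)) (B n)).prod
        ((r n).comp (AddMonoidHom.snd (A (n+1)) (B n)))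
    -- P and Q are chain maps, and they are mutually inverse up to chain homotopy
    (∀ n (x : A (n+1) × C n), P (n+1) (dCf n x) = dCif n (P n x)) ∧
    (∀ n (x : A (n+1) × B n), Q (n+1) (dCif n x) = dCf n (Q n x)) ∧
    (∃ H : ∀ n : ℤ, (A (n+1+1) × C (n+1)) →+ (A (n+1) × C n),
      ∀ n (x : A (n+1+1) × C (n+1)),
        x - Q (n+1) (P (n+1) x) = dCf n (H n x) + H (n+1) (dCf (n+1) x)) ∧
    (∃ K : ∀ n : ℤ, (A (n+1+1) × B (n+1)) →+ (A (n+1) × B n),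
      ∀ n (x : A (n+1+1) × B (n+1)),
        x - P (n+1) (Q (n+1) x) = dCif n (K n x) + K (n+1) (dCif (n+1) x)) :=
  cone_of_if_homotopy_equiv_general A B C dA dB dC f r hr i hi h hdr hri hhi
end

section
/- (Single Gaussian elimination) Consider a chain complex in an additive category of the form A → B⊕C → D⊕E → F, where the differential B⊕C → D⊕E is given by the matrix (φ, λ; μ, ν) with φ : B → D an isomorphism, the map A → B⊕C has second component α, and the map D⊕E → F has second component ε. Then this complex is chain homotopy equivalent to the complex A →α C →(ν - μφ⁻¹λ) E →ε F. -/
/-!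
Because `φ` is invertible, `d² = 0` forces `β = -φ⁻¹λα` and `δ = -εμφ⁻¹`, so both outer
differentials factor through the `C` and `E` summands. Changing bases by
`(b, c) ↦ (b + φ⁻¹λc, c)` and `(d, e) ↦ (d, e - μφ⁻¹d)` turns the middle differential into
`diag(φ, ν - μφ⁻¹λ)`, and the acyclic summand `B ≅ D` is contracted by `φ⁻¹`: the only
nonzero component of the homotopy is `(φ⁻¹ ∘ pr₁, 0) : D ⊕ E → B ⊕ C`.
-/

namespace GaussianElimination

variable {A B C D E F : Type*} [AddCommGroup A] [AddCommGroup B] [AddCommGroup C]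
  [AddCommGroup D] [AddCommGroup E] [AddCommGroup F]
  {β : A →+ B} {α : A →+ C} (φ : B ≃+ D) (lam : C →+ D) (mu : B →+ E) (nu : C →+ E)
  {δ : D →+ F} {ε : E →+ F}

def d₁ (β : A →+ B) (α : A →+ C) : A →+ B × C := β.prod α

def d₂ : B × C →+ D × E :=
  ((φ.toAddMonoidHom.comp (AddMonoidHom.fst B C)) + (lam.comp (AddMonoidHom.snd B C))).prod
    ((mu.comp (AddMonoidHom.fst B C)) + (nu.comp (AddMonoidHom.snd B C)))

def d₃ (δ : D →+ F) (ε : E →+ F) : D × E →+ F :=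
  (δ.comp (AddMonoidHom.fst D E)) + (ε.comp (AddMonoidHom.snd D E))

def schur : C →+ E := nu - mu.comp (φ.symm.toAddMonoidHom.comp lam)

def retr₂ : D × E →+ E :=
  (AddMonoidHom.snd D E) - (mu.comp (φ.symm.toAddMonoidHom.comp (AddMonoidHom.fst D E)))

def incl₁ : C →+ B × C := (-(φ.symm.toAddMonoidHom.comp lam)).prod (AddMonoidHom.id C)

def incl₂ : E →+ D × E := (0 : E →+ D).prod (AddMonoidHom.id E)

def homotopy : D × E →+ B × C := (φ.symm.toAddMonoidHom.comp (AddMonoidHom.fst D E)).prod 0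

@[simp] lemma d₁_apply (a : A) : d₁ β α a = (β a, α a) := rfl

@[simp] lemma d₂_apply (x : B × C) :
    d₂ φ lam mu nu x = (φ x.1 + lam x.2, mu x.1 + nu x.2) := rfl

@[simp] lemma d₃_apply (y : D × E) : d₃ δ ε y = δ y.1 + ε y.2 := rfl

@[simp] lemma schur_apply (c : C) : schur φ lam mu nu c = nu c - mu (φ.symm (lam c)) := rfl

@[simp] lemma retr₂_apply (y : D × E) : retr₂ φ mu y = y.2 - mu (φ.symm y.1) := rfl

@[simp] lemma incl₁_apply (c : C) : incl₁ φ lam c = (-φ.symm (lam c), c) := rfl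

@[simp] lemma incl₂_apply (e : E) : incl₂ e = ((0 : D), e) := rfl

@[simp] lemma homotopy_apply (y : D × E) : homotopy φ y = (φ.symm y.1, (0 : C)) := rfl

variable {φ lam mu nu}

lemma symm_lam_apply_eq_neg (h : ∀ a, d₂ φ lam mu nu (d₁ β α a) = 0) (a : A) :
    φ.symm (lam (α a)) = -β a := by
  rw [φ.symm_apply_eq, map_neg, eq_neg_iff_add_eq_zero, add_comm]
  exact congrArg Prod.fst (h a)

lemma schur_apply_α (h : ∀ a, d₂ φ lam mu nu (d₁ β α a) = 0) (a : A) :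
    schur φ lam mu nu (α a) = 0 := by
  rw [schur_apply, symm_lam_apply_eq_neg h, map_neg, sub_neg_eq_add, add_comm]
  exact congrArg Prod.snd (h a)

lemma incl₁_apply_α (h : ∀ a, d₂ φ lam mu nu (d₁ β α a) = 0) (a : A) :
    incl₁ φ lam (α a) = d₁ β α a := by
  simp [symm_lam_apply_eq_neg h]

lemma ε_schur_apply (h : ∀ x, d₃ δ ε (d₂ φ lam mu nu x) = 0) (c : C) :
    ε (schur φ lam mu nu c) = 0 := by
  rw [schur_apply, map_sub, ← neg_add_eq_sub]
  simpa using h (-φ.symm (lam c), c)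

lemma d₃_eq_ε_retr₂ (h : ∀ x, d₃ δ ε (d₂ φ lam mu nu x) = 0) (y : D × E) :
    d₃ δ ε y = ε (retr₂ φ mu y) := by
  have hδ : δ y.1 = -ε (mu (φ.symm y.1)) :=
    eq_neg_of_add_eq_zero_left (by simpa using h (φ.symm y.1, 0))
  rw [d₃_apply, retr₂_apply, hδ, map_sub, neg_add_eq_sub]

lemma retr₂_d₂ (x : B × C) :
    retr₂ φ mu (d₂ φ lam mu nu x) = schur φ lam mu nu x.2 := by
  simp only [d₂_apply, retr₂_apply, schur_apply, map_add, AddEquiv.symm_apply_apply]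
  abel

lemma incl₂_schur (c : C) :
    incl₂ (schur φ lam mu nu c) = d₂ φ lam mu nu (incl₁ φ lam c) := by
  simp [sub_eq_neg_add]

lemma sub_incl₁_snd (x : B × C) : x - incl₁ φ lam x.2 = homotopy φ (d₂ φ lam mu nu x) := by
  simp [Prod.ext_iff]

lemma sub_incl₂_retr₂ (y : D × E) :
    y - incl₂ (retr₂ φ mu y) = d₂ φ lam mu nu (homotopy φ y) := by
  simp [Prod.ext_iff]

end GaussianElimination

open GaussianElimination in
/-- Single Gaussian elimination: the complex `A → B⊕C → D⊕E → F` with middle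
differential `(φ, λ; μ, ν)`, `φ` an isomorphism, is chain homotopy equivalent to
`A →α C →(ν - μφ⁻¹λ) E →ε F`, via `(0,1)`, `(-μφ⁻¹,1)` and `(-φ⁻¹λ;1)`, `(0;1)`. -/
theorem single_gaussian_elimination
    (A B C D E F : Type) [AddCommGroup A] [AddCommGroup B] [AddCommGroup C]
    [AddCommGroup D] [AddCommGroup E] [AddCommGroup F]
    (β : A →+ B) (α : A →+ C)
    (φ : B ≃+ D) (lam : C →+ D) (mu : B →+ E) (nu : C →+ E)
    (δ : D →+ F) (ε : E →+ F) :
    -- the differentials of the big complex A → B×C → D×E → F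
    let d1 : A →+ B × C := β.prod α
    let d2 : B × C →+ D × E :=
      ((φ.toAddMonoidHom.comp (AddMonoidHom.fst B C)) + (lam.comp (AddMonoidHom.snd B C))).prod
        ((mu.comp (AddMonoidHom.fst B C)) + (nu.comp (AddMonoidHom.snd B C)))
    let d3 : D × E →+ F := (δ.comp (AddMonoidHom.fst D E)) + (ε.comp (AddMonoidHom.snd D E))
    -- the differentials of the small complex A → C → E → F
    let e2 : C →+ E := nu - mu.comp (φ.symm.toAddMonoidHom.comp lam)
    -- the retraction (identity, (0,1), (-μφ⁻¹,1), identity)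
    let R1 : B × C →+ C := AddMonoidHom.snd B C
    let R2 : D × E →+ E :=
      (AddMonoidHom.snd D E) - (mu.comp (φ.symm.toAddMonoidHom.comp (AddMonoidHom.fst D E)))
    -- the inclusion (identity, (-φ⁻¹λ;1), (0;1), identity)
    let I1 : C →+ B × C := (-(φ.symm.toAddMonoidHom.comp lam)).prod (AddMonoidHom.id C)
    let I2 : E →+ D × E := (0 : E →+ D).prod (AddMonoidHom.id E)
    -- assuming d² = 0:
    (∀ a : A, d2 (d1 a) = 0) →
    (∀ x : B × C, d3 (d2 x) = 0) →
    -- the small complex is a complex, R and I are chain maps, R∘I = 1, and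
    -- 1 - I∘R is null-homotopic, so the two complexes are chain homotopy equivalent
    ((∀ a : A, e2 (α a) = 0) ∧
     (∀ c : C, ε (e2 c) = 0) ∧
     (∀ a : A, R1 (d1 a) = α a) ∧
     (∀ x : B × C, R2 (d2 x) = e2 (R1 x)) ∧
     (∀ y : D × E, d3 y = ε (R2 y)) ∧
     (∀ a : A, I1 (α a) = d1 a) ∧
     (∀ c : C, I2 (e2 c) = d2 (I1 c)) ∧
     (∀ e : E, d3 (I2 e) = ε e) ∧
     (∀ c : C, R1 (I1 c) = c) ∧
     (∀ e : E, R2 (I2 e) = e) ∧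
     (∃ (h0 : B × C →+ A) (h1 : D × E →+ B × C) (h2 : F →+ D × E),
       (∀ a : A, a - a = h0 (d1 a)) ∧
       (∀ x : B × C, x - I1 (R1 x) = d1 (h0 x) + h1 (d2 x)) ∧
       (∀ y : D × E, y - I2 (R2 y) = d2 (h1 y) + h2 (d3 y)) ∧
       (∀ z : F, z - z = d3 (h2 z)))) := by
  intro d1 d2 d3 e2 R1 R2 I1 I2 h21 h32
  refine ⟨schur_apply_α h21, ε_schur_apply h32, fun _ => rfl, retr₂_d₂, d₃_eq_ε_retr₂ h32,
    incl₁_apply_α h21, incl₂_schur, fun _ => by simp [d3, I2], fun _ => rfl,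
    fun _ => by simp [R2, I2],
    0, homotopy φ, 0, fun _ => by simp, fun x => ?_, fun y => ?_, fun _ => by simp⟩
  · rw [AddMonoidHom.zero_apply, map_zero, zero_add]
    exact sub_incl₁_snd x
  · rw [AddMonoidHom.zero_apply, add_zero]
    exact sub_incl₂_retr₂ y
end

section
/- The chain homotopy equivalence produced by single Gaussian elimination is a strong deformation retract: the composite of the retraction and inclusion equals the identity on the small complex, the identity of the big complex minus inclusion-after-retraction equals dh + hd for an explicit homotopy h, and the homotopy satisfies h∘i = 0 and r∘h = 0. -/
/-- Single Gaussian elimination is a strong deformation retract: with the explicit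
homotopy `h` whose only nonzero component is `(φ⁻¹,0;0,0) : D⊕E → B⊕C`, the
retraction `r` and inclusion `i` satisfy `r∘i = 1`, `1 - i∘r = dh + hd`,
`h∘i = 0` and `r∘h = 0`. -/
theorem single_gaussian_elimination_strong_deformation_retract
    (A B C D E F : Type) [AddCommGroup A] [AddCommGroup B] [AddCommGroup C]
    [AddCommGroup D] [AddCommGroup E] [AddCommGroup F]
    (β : A →+ B) (α : A →+ C)
    (φ : B ≃+ D) (lam : C →+ D) (mu : B →+ E) (nu : C →+ E)
    (δ : D →+ F) (ε : E →+ F) :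
    -- the differentials of the big complex A → B×C → D×E → F
    let d1 : A →+ B × C := β.prod α
    let d2 : B × C →+ D × E :=
      ((φ.toAddMonoidHom.comp (AddMonoidHom.fst B C)) + (lam.comp (AddMonoidHom.snd B C))).prod
        ((mu.comp (AddMonoidHom.fst B C)) + (nu.comp (AddMonoidHom.snd B C)))
    let d3 : D × E →+ F := (δ.comp (AddMonoidHom.fst D E)) + (ε.comp (AddMonoidHom.snd D E))
    -- the retraction (identity, (0,1), (-μφ⁻¹,1), identity)
    let R1 : B × C →+ C := AddMonoidHom.snd B C
    let R2 : D × E →+ E :=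
      (AddMonoidHom.snd D E) - (mu.comp (φ.symm.toAddMonoidHom.comp (AddMonoidHom.fst D E)))
    -- the inclusion (identity, (-φ⁻¹λ;1), (0;1), identity)
    let I1 : C →+ B × C := (-(φ.symm.toAddMonoidHom.comp lam)).prod (AddMonoidHom.id C)
    let I2 : E →+ D × E := (0 : E →+ D).prod (AddMonoidHom.id E)
    -- the explicit homotopy: zero except for (φ⁻¹,0;0,0) : D×E → B×C
    let h0 : B × C →+ A := 0
    let h1 : D × E →+ B × C :=
      (φ.symm.toAddMonoidHom.comp (AddMonoidHom.fst D E)).prod (0 : D × E →+ C)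
    let h2 : F →+ D × E := 0
    -- assuming d² = 0:
    (∀ a : A, d2 (d1 a) = 0) →
    (∀ x : B × C, d3 (d2 x) = 0) →
    -- strong deformation retract conditions: r∘i = 1, 1 - i∘r = dh + hd,
    -- h∘i = 0, r∘h = 0 (at every level of the four-term complexes)
    ((∀ c : C, R1 (I1 c) = c) ∧
     (∀ e : E, R2 (I2 e) = e) ∧
     (∀ a : A, a - a = h0 (d1 a)) ∧
     (∀ x : B × C, x - I1 (R1 x) = d1 (h0 x) + h1 (d2 x)) ∧
     (∀ y : D × E, y - I2 (R2 y) = d2 (h1 y) + h2 (d3 y)) ∧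
     (∀ z : F, z - z = d3 (h2 z)) ∧
     (∀ c : C, h0 (I1 c) = 0) ∧
     (∀ e : E, h1 (I2 e) = 0) ∧
     (∀ y : D × E, R1 (h1 y) = 0) ∧
     (∀ z : F, R2 (h2 z) = 0)) := by
  intro d1 d2 d3 R1 R2 I1 I2 h0 h1 h2 _ _
  -- On `B × C`: `(b, c) - (-φ⁻¹ λ c, c) = (φ⁻¹ (φ b + λ c), 0)`.
  have homotopy_BC : ∀ x : B × C, x - I1 (R1 x) = d1 (h0 x) + h1 (d2 x) := by
    rintro ⟨b, c⟩
    ext <;> simp [d1, d2, h0, h1, I1, R1, add_comm]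
  -- On `D × E`: `(d, e) - (0, e - μ φ⁻¹ d) = (d, μ φ⁻¹ d) = d2 (φ⁻¹ d, 0)`.
  have homotopy_DE : ∀ y : D × E, y - I2 (R2 y) = d2 (h1 y) + h2 (d3 y) := by
    rintro ⟨d, e⟩
    ext <;> simp [d2, d3, h1, h2, I2, R2]
  exact ⟨fun _ => rfl, fun _ => by simp [R2, I2], fun _ => sub_self _,
    homotopy_BC, homotopy_DE, fun _ => by simp [d3, h2],
    fun _ => rfl, fun _ => by simp [h1, I2], fun _ => rfl, fun _ => by simp [R2, h2]⟩
end

section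
/- (Double Gaussian elimination) Consider a chain complex A → B⊕C → D1⊕D2⊕E → F⊕G → H where the differential B⊕C → D1⊕D2⊕E has matrix (ψ, β; •, •; γ, δ) with ψ : B → D1 an isomorphism, and the differential D1⊕D2⊕E → F⊕G has matrix (•, φ, λ; •, μ, ν) with φ : D2 → F an isomorphism. Then the complex is chain homotopy equivalent to A →α C →(δ - γψ⁻¹β) E →(ν - μφ⁻¹λ) G →η H, where α is the C-component of the first differential and η is the restriction of the last differential to G. -/
/-!
Eliminate the two isomorphisms one after the other. Eliminating `ψ` retracts the complex onto
`A → C → D₂ ⊕ E → F ⊕ G → H`, eliminating `φ` then retracts that onto `A → C → E → G → H`.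
Composing the two retractions gives the projection `P = (1, snd, proj₂, proj₃, 1)`, the inclusion
`Q = (1, incl₁, incl₂, inr, 1)` and the homotopy `(0, homotopy₁, homotopy₂, 0)` below. Here
`P ∘ Q = 1` on the nose, and every identity needed follows from `d² = 0`, which expresses the
entries `β₀`, `θ₁`, `θ₂`, `θ` through `ψ⁻¹` and `φ⁻¹`.
-/

namespace DoubleGaussianElimination

variable {A B C D₁ D₂ E F G H : Type*} [AddCommGroup A] [AddCommGroup B] [AddCommGroup C]
  [AddCommGroup D₁] [AddCommGroup D₂] [AddCommGroup E] [AddCommGroup F] [AddCommGroup G]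
  [AddCommGroup H]
  (β₀ : A →+ B) (α : A →+ C) (ψ : B ≃+ D₁) (β : C →+ D₁) (p : B →+ D₂) (q : C →+ D₂)
  (γ : B →+ E) (δ : C →+ E) (θ₁ : D₁ →+ F) (φ : D₂ ≃+ F) (lam : E →+ F)
  (θ₂ : D₁ →+ G) (mu : D₂ →+ G) (nu : E →+ G) (θ : F →+ H) (η : G →+ H)

def d₀ : A →+ B × C := β₀.prod α

def d₁ : B × C →+ D₁ × D₂ × E :=
  ((ψ.toAddMonoidHom.comp (AddMonoidHom.fst B C)) + (β.comp (AddMonoidHom.snd B C))).prod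
    (((p.comp (AddMonoidHom.fst B C)) + (q.comp (AddMonoidHom.snd B C))).prod
      ((γ.comp (AddMonoidHom.fst B C)) + (δ.comp (AddMonoidHom.snd B C))))

def d₂ : D₁ × D₂ × E →+ F × G :=
  ((θ₁.comp (AddMonoidHom.fst D₁ (D₂ × E))) +
      (φ.toAddMonoidHom.comp ((AddMonoidHom.fst D₂ E).comp (AddMonoidHom.snd D₁ (D₂ × E)))) +
      (lam.comp ((AddMonoidHom.snd D₂ E).comp (AddMonoidHom.snd D₁ (D₂ × E))))).prod
    ((θ₂.comp (AddMonoidHom.fst D₁ (D₂ × E))) +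
      (mu.comp ((AddMonoidHom.fst D₂ E).comp (AddMonoidHom.snd D₁ (D₂ × E)))) +
      (nu.comp ((AddMonoidHom.snd D₂ E).comp (AddMonoidHom.snd D₁ (D₂ × E)))))

def d₃ : F × G →+ H := (θ.comp (AddMonoidHom.fst F G)) + (η.comp (AddMonoidHom.snd F G))

def e₁ : C →+ E := δ - γ.comp (ψ.symm.toAddMonoidHom.comp β)

def e₂ : E →+ G := nu - mu.comp (φ.symm.toAddMonoidHom.comp lam)

def proj₂ : D₁ × D₂ × E →+ E :=
  (AddMonoidHom.snd D₂ E).comp (AddMonoidHom.snd D₁ (D₂ × E)) -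
    γ.comp (ψ.symm.toAddMonoidHom.comp (AddMonoidHom.fst D₁ (D₂ × E)))

def proj₃ : F × G →+ G :=
  AddMonoidHom.snd F G - mu.comp (φ.symm.toAddMonoidHom.comp (AddMonoidHom.fst F G))

def incl₁ : C →+ B × C := (-ψ.symm.toAddMonoidHom.comp β).prod (AddMonoidHom.id C)

def incl₂ : E →+ D₁ × D₂ × E :=
  (0 : E →+ D₁).prod ((-φ.symm.toAddMonoidHom.comp lam).prod (AddMonoidHom.id E))

def homotopy₁ : D₁ × D₂ × E →+ B × C :=
  (AddMonoidHom.inl B C).comp (ψ.symm.toAddMonoidHom.comp (AddMonoidHom.fst D₁ (D₂ × E)))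

def homotopy₂ : F × G →+ D₁ × D₂ × E :=
  (0 : F × G →+ D₁).prod
    ((AddMonoidHom.inl D₂ E).comp (φ.symm.toAddMonoidHom.comp (AddMonoidHom.fst F G)))

section apply

variable {β₀ α ψ β p q γ δ θ₁ φ lam θ₂ mu nu θ η}

@[simp] lemma d₀_apply (a : A) : d₀ β₀ α a = (β₀ a, α a) := rfl

@[simp] lemma d₁_apply (x : B × C) :
    d₁ ψ β p q γ δ x = (ψ x.1 + β x.2, p x.1 + q x.2, γ x.1 + δ x.2) := rfl

@[simp] lemma d₂_apply (y : D₁ × D₂ × E) :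
    d₂ θ₁ φ lam θ₂ mu nu y =
      (θ₁ y.1 + φ y.2.1 + lam y.2.2, θ₂ y.1 + mu y.2.1 + nu y.2.2) := rfl

@[simp] lemma d₃_apply (z : F × G) : d₃ θ η z = θ z.1 + η z.2 := rfl

@[simp] lemma e₁_apply (c : C) : e₁ ψ β γ δ c = δ c - γ (ψ.symm (β c)) := rfl

@[simp] lemma e₂_apply (e : E) : e₂ φ lam mu nu e = nu e - mu (φ.symm (lam e)) := rfl

@[simp] lemma proj₂_apply (y : D₁ × D₂ × E) : proj₂ ψ γ y = y.2.2 - γ (ψ.symm y.1) := rfl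

@[simp] lemma proj₃_apply (z : F × G) : proj₃ φ mu z = z.2 - mu (φ.symm z.1) := rfl

@[simp] lemma incl₁_apply (c : C) : incl₁ ψ β c = (-ψ.symm (β c), c) := rfl

@[simp] lemma incl₂_apply (e : E) : incl₂ φ lam e = ((0 : D₁), -φ.symm (lam e), e) := rfl

@[simp] lemma homotopy₁_apply (y : D₁ × D₂ × E) : homotopy₁ ψ y = (ψ.symm y.1, (0 : C)) := rfl

@[simp] lemma homotopy₂_apply (z : F × G) : homotopy₂ φ z = ((0 : D₁), φ.symm z.1, (0 : E)) := rfl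

end apply

variable {β₀ α ψ β p q γ δ θ₁ φ lam θ₂ mu nu θ η}

lemma β₀_eq_of_d₁_d₀ (h : ∀ a, d₁ ψ β p q γ δ (d₀ β₀ α a) = 0) (a : A) :
    β₀ a = -ψ.symm (β (α a)) :=
  eq_neg_of_add_eq_zero_left (by simpa using congrArg ψ.symm (congrArg Prod.fst (h a)))

lemma θ_eq_of_d₃_d₂ (h : ∀ y, d₃ θ η (d₂ θ₁ φ lam θ₂ mu nu y) = 0) (f : F) :
    θ f = -η (mu (φ.symm f)) := by
  have hf := h (0, φ.symm f, 0)
  simp only [d₂_apply, d₃_apply, AddEquiv.apply_symm_apply, map_zero, zero_add, add_zero] at hf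
  exact eq_neg_of_add_eq_zero_left hf

section d₂_d₁

variable (h : ∀ x, d₂ θ₁ φ lam θ₂ mu nu (d₁ ψ β p q γ δ x) = 0)
include h

lemma θ₁_eq_of_d₂_d₁ (x : D₁) : θ₁ x = -φ (p (ψ.symm x)) - lam (γ (ψ.symm x)) := by
  have hx := congrArg Prod.fst (h (ψ.symm x, 0))
  simp only [d₁_apply, d₂_apply, AddEquiv.apply_symm_apply, map_zero, add_zero] at hx
  rw [add_assoc] at hx
  rw [eq_neg_of_add_eq_zero_left hx, neg_add']

lemma θ₂_eq_of_d₂_d₁ (x : D₁) : θ₂ x = -mu (p (ψ.symm x)) - nu (γ (ψ.symm x)) := by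
  have hx := congrArg Prod.snd (h (ψ.symm x, 0))
  simp only [d₁_apply, d₂_apply, AddEquiv.apply_symm_apply, map_zero, add_zero] at hx
  rw [add_assoc] at hx
  rw [eq_neg_of_add_eq_zero_left hx, neg_add']

lemma p_sub_q_eq_of_d₂_d₁ (c : C) :
    p (ψ.symm (β c)) - q c = φ.symm (lam (e₁ ψ β γ δ c)) := by
  have hc := congrArg Prod.fst (h (0, c))
  simp only [d₁_apply, d₂_apply, map_zero, zero_add, θ₁_eq_of_d₂_d₁ h, Prod.fst_zero] at hc
  apply φ.injective
  simp only [e₁_apply, map_sub, AddEquiv.apply_symm_apply]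
  refine eq_of_sub_eq_zero ?_
  rw [← neg_eq_zero, ← hc]
  abel

lemma proj₃_d₂ (y : D₁ × D₂ × E) :
    proj₃ φ mu (d₂ θ₁ φ lam θ₂ mu nu y) = e₂ φ lam mu nu (proj₂ ψ γ y) := by
  simp only [proj₂_apply, proj₃_apply, e₂_apply, d₂_apply, θ₁_eq_of_d₂_d₁ h, θ₂_eq_of_d₂_d₁ h,
    map_add, map_sub, map_neg, AddEquiv.symm_apply_apply]
  abel

lemma incl₂_e₁ (c : C) :
    incl₂ φ lam (e₁ ψ β γ δ c) = d₁ ψ β p q γ δ (incl₁ ψ β c) := by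
  rw [incl₂_apply, ← p_sub_q_eq_of_d₂_d₁ h]
  simp only [e₁_apply, d₁_apply, incl₁_apply, map_neg, AddEquiv.apply_symm_apply, Prod.mk.injEq]
  refine ⟨(neg_add_cancel _).symm, ?_, ?_⟩ <;> abel

lemma sub_incl₂_proj₂ (w : D₁ × D₂ × E) :
    w - incl₂ φ lam (proj₂ ψ γ w) =
      d₁ ψ β p q γ δ (homotopy₁ ψ w) + homotopy₂ φ (d₂ θ₁ φ lam θ₂ mu nu w) := by
  obtain ⟨x, y, z⟩ := w
  simp only [proj₂_apply, incl₂_apply, homotopy₁_apply, homotopy₂_apply, d₁_apply, d₂_apply,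
    θ₁_eq_of_d₂_d₁ h, AddEquiv.apply_symm_apply, AddEquiv.symm_apply_apply, map_add, map_sub,
    map_neg, map_zero, Prod.mk_sub_mk, Prod.mk_add_mk, Prod.mk.injEq]
  refine ⟨?_, ?_, ?_⟩ <;> abel

end d₂_d₁

lemma proj₂_d₁ (x : B × C) : proj₂ ψ γ (d₁ ψ β p q γ δ x) = e₁ ψ β γ δ x.2 := by
  simp

lemma d₃_eq_η_proj₃ (h : ∀ y, d₃ θ η (d₂ θ₁ φ lam θ₂ mu nu y) = 0) (z : F × G) :
    d₃ θ η z = η (proj₃ φ mu z) := by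
  simp only [d₃_apply, θ_eq_of_d₃_d₂ h, proj₃_apply, map_sub]
  abel

lemma incl₁_α (h : ∀ a, d₁ ψ β p q γ δ (d₀ β₀ α a) = 0) (a : A) :
    incl₁ ψ β (α a) = d₀ β₀ α a := by
  simp [β₀_eq_of_d₁_d₀ h]

lemma inr_e₂ (e : E) :
    AddMonoidHom.inr F G (e₂ φ lam mu nu e) = d₂ θ₁ φ lam θ₂ mu nu (incl₂ φ lam e) := by
  simp only [e₂_apply, AddMonoidHom.inr_apply, incl₂_apply, d₂_apply, map_zero, map_neg,
    AddEquiv.apply_symm_apply, zero_add, neg_add_cancel, Prod.mk.injEq, true_and]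
  abel

lemma sub_incl₁_snd (x : B × C) : x - incl₁ ψ β x.2 = homotopy₁ ψ (d₁ ψ β p q γ δ x) := by
  ext <;> simp

lemma sub_inr_proj₃ (z : F × G) :
    z - AddMonoidHom.inr F G (proj₃ φ mu z) = d₂ θ₁ φ lam θ₂ mu nu (homotopy₂ φ z) := by
  ext <;> simp

end DoubleGaussianElimination

open DoubleGaussianElimination in
/-- Double Gaussian elimination: a complex `A → B⊕C → D1⊕D2⊕E → F⊕G → H` whose
second differential has matrix `(ψ, β; p, q; γ, δ)` with `ψ : B ≅ D1`, and whose
third differential has matrix `(θ1, φ, λ; θ2, μ, ν)` with `φ : D2 ≅ F`, is chain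
homotopy equivalent to `A →α C →(δ - γψ⁻¹β) E →(ν - μφ⁻¹λ) G →η H`. -/
theorem double_gaussian_elimination
    (A B C D1 D2 E F G H : Type)
    [AddCommGroup A] [AddCommGroup B] [AddCommGroup C] [AddCommGroup D1]
    [AddCommGroup D2] [AddCommGroup E] [AddCommGroup F] [AddCommGroup G]
    [AddCommGroup H]
    (β0 : A →+ B) (α : A →+ C)
    (ψ : B ≃+ D1) (β : C →+ D1) (p : B →+ D2) (q : C →+ D2)
    (γ : B →+ E) (δ : C →+ E)
    (θ1 : D1 →+ F) (φ : D2 ≃+ F) (lam : E →+ F)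
    (θ2 : D1 →+ G) (mu : D2 →+ G) (nu : E →+ G)
    (θ : F →+ H) (η : G →+ H) :
    -- projections from the triple product D1 × D2 × E
    let p1 : D1 × D2 × E →+ D1 := AddMonoidHom.fst D1 (D2 × E)
    let p2 : D1 × D2 × E →+ D2 :=
      (AddMonoidHom.fst D2 E).comp (AddMonoidHom.snd D1 (D2 × E))
    let p3 : D1 × D2 × E →+ E :=
      (AddMonoidHom.snd D2 E).comp (AddMonoidHom.snd D1 (D2 × E))
    -- the differentials of the big complex A → B×C → D1×D2×E → F×G → H
    let d0 : A →+ B × C := β0.prod α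
    let d1 : B × C →+ D1 × D2 × E :=
      ((ψ.toAddMonoidHom.comp (AddMonoidHom.fst B C)) + (β.comp (AddMonoidHom.snd B C))).prod
        (((p.comp (AddMonoidHom.fst B C)) + (q.comp (AddMonoidHom.snd B C))).prod
          ((γ.comp (AddMonoidHom.fst B C)) + (δ.comp (AddMonoidHom.snd B C))))
    let d2 : D1 × D2 × E →+ F × G :=
      ((θ1.comp p1) + (φ.toAddMonoidHom.comp p2) + (lam.comp p3)).prod
        ((θ2.comp p1) + (mu.comp p2) + (nu.comp p3))
    let d3 : F × G →+ H := (θ.comp (AddMonoidHom.fst F G)) + (η.comp (AddMonoidHom.snd F G))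
    -- the differentials of the small complex A → C → E → G → H
    let e0 : A →+ C := α
    let e1 : C →+ E := δ - γ.comp (ψ.symm.toAddMonoidHom.comp β)
    let e2 : E →+ G := nu - mu.comp (φ.symm.toAddMonoidHom.comp lam)
    let e3 : G →+ H := η
    -- assuming d² = 0:
    (∀ a : A, d1 (d0 a) = 0) →
    (∀ x : B × C, d2 (d1 x) = 0) →
    (∀ y : D1 × D2 × E, d3 (d2 y) = 0) →
    -- there is a chain homotopy equivalence between the two complexes
    (∃ (P0 : A →+ A) (P1 : B × C →+ C) (P2 : D1 × D2 × E →+ E) (P3 : F × G →+ G)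
       (P4 : H →+ H)
       (Q0 : A →+ A) (Q1 : C →+ B × C) (Q2 : E →+ D1 × D2 × E) (Q3 : G →+ F × G)
       (Q4 : H →+ H),
      -- P is a chain map
      (∀ a : A, P1 (d0 a) = e0 (P0 a)) ∧
      (∀ x : B × C, P2 (d1 x) = e1 (P1 x)) ∧
      (∀ y : D1 × D2 × E, P3 (d2 y) = e2 (P2 y)) ∧
      (∀ z : F × G, P4 (d3 z) = e3 (P3 z)) ∧
      -- Q is a chain map
      (∀ a : A, Q1 (e0 a) = d0 (Q0 a)) ∧
      (∀ c : C, Q2 (e1 c) = d1 (Q1 c)) ∧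
      (∀ e : E, Q3 (e2 e) = d2 (Q2 e)) ∧
      (∀ g : G, Q4 (e3 g) = d3 (Q3 g)) ∧
      -- 1 - Q∘P is null-homotopic on the big complex
      (∃ (h0 : B × C →+ A) (h1 : D1 × D2 × E →+ B × C) (h2 : F × G →+ D1 × D2 × E)
         (h3 : H →+ F × G),
        (∀ a : A, a - Q0 (P0 a) = h0 (d0 a)) ∧
        (∀ x : B × C, x - Q1 (P1 x) = d0 (h0 x) + h1 (d1 x)) ∧
        (∀ y : D1 × D2 × E, y - Q2 (P2 y) = d1 (h1 y) + h2 (d2 y)) ∧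
        (∀ z : F × G, z - Q3 (P3 z) = d2 (h2 z) + h3 (d3 z)) ∧
        (∀ w : H, w - Q4 (P4 w) = d3 (h3 w))) ∧
      -- 1 - P∘Q is null-homotopic on the small complex
      (∃ (k0 : C →+ A) (k1 : E →+ C) (k2 : G →+ E) (k3 : H →+ G),
        (∀ a : A, a - P0 (Q0 a) = k0 (e0 a)) ∧
        (∀ c : C, c - P1 (Q1 c) = e0 (k0 c) + k1 (e1 c)) ∧
        (∀ e : E, e - P2 (Q2 e) = e1 (k1 e) + k2 (e2 e)) ∧
        (∀ g : G, g - P3 (Q3 g) = e2 (k2 g) + k3 (e3 g)) ∧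
        (∀ w : H, w - P4 (Q4 w) = e3 (k3 w)))) := by
  intro p1 p2 p3 d0 d1 d2 d3 e0 e1 e2 e3 h01 h12 h23
  refine ⟨.id A, .snd B C, proj₂ ψ γ, proj₃ φ mu, .id H,
    .id A, incl₁ ψ β, incl₂ φ lam, .inr F G, .id H,
    fun _ => rfl, proj₂_d₁, proj₃_d₂ h12, d₃_eq_η_proj₃ h23, incl₁_α h01, incl₂_e₁ h12, inr_e₂,
    fun g => by simp [d3, e3],
    ⟨0, homotopy₁ ψ, homotopy₂ φ, 0, fun a => by simp, fun x => ?_, sub_incl₂_proj₂ h12,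
      fun z => ?_, fun w => by simp⟩,
    ⟨0, 0, 0, 0, ?_, ?_, ?_, ?_, ?_⟩⟩
  · rw [AddMonoidHom.zero_apply, map_zero, zero_add]
    exact sub_incl₁_snd x
  · rw [AddMonoidHom.zero_apply, add_zero]
    exact sub_inr_proj₃ z
  all_goals intro; simp
end

section
/- Let f, g : C• → D• be chain maps between complexes in a graded additive category, and suppose f is chain homotopic to α·g for some scalar α (in the base ring). If A is a homotopically isolated direct summand of some Cⁱ (i.e., for every degree-zero homotopy h : C• → D•-1, the restriction of dh + hd to A is zero), and f and g agree and are nonzero on A, then α acts as the identity on the image, i.e., f is chain homotopic to g. -/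
theorem eq_one_of_sub_smul_eq_zero {R M : Type*} [Ring R] [AddCommGroup M] [Module R M]
    [NoZeroSMulDivisors R M] {α : R} {x : M} (hx : x ≠ 0) (h : x - α • x = 0) : α = 1 := by
  have h' : (1 - α) • x = 0 := by rwa [sub_smul, one_smul]
  exact (sub_eq_zero.mp ((eq_zero_or_eq_zero_of_smul_eq_zero h').resolve_right hx)).symm

theorem homotopy_isolation_general
    (R : Type) [CommRing R] (C D : ℤ → Type)
    [∀ n, AddCommGroup (C n)] [∀ n, Module R (C n)]
    [∀ n, AddCommGroup (D n)] [∀ n, Module R (D n)]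
    (dC : ∀ n, C n →ₗ[R] C (n+1)) (dD : ∀ n, D n →ₗ[R] D (n+1))
    (f g : ∀ n, C n →ₗ[R] D n)
    (α : R) (i : ℤ) (A : Submodule R (C (i+1)))
    [NoZeroSMulDivisors R (D (i+1))]
    -- A is homotopically isolated
    (hiso : ∀ (h : ∀ n, C (n+1) →ₗ[R] D n), ∀ a ∈ A,
      dD i (h i a) + h (i+1) (dC (i+1) a) = 0)
    -- f and g agree and are nonzero on A
    (hagree : ∀ a ∈ A, f (i+1) a = g (i+1) a)
    (hnonzero : ∃ a ∈ A, f (i+1) a ≠ 0)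
    -- f is chain homotopic to α • g
    (hhom : ∃ h : ∀ n, C (n+1) →ₗ[R] D n, ∀ n (x : C (n+1)),
      f (n+1) x - α • g (n+1) x = dD n (h n x) + h (n+1) (dC (n+1) x)) :
    -- then f is chain homotopic to g
    ∃ h : ∀ n, C (n+1) →ₗ[R] D n, ∀ n (x : C (n+1)),
      f (n+1) x - g (n+1) x = dD n (h n x) + h (n+1) (dC (n+1) x) := by
  obtain ⟨h, hh⟩ := hhom
  obtain ⟨a, ha, hfa⟩ := hnonzero
  have hfa_sub : f (i+1) a - α • f (i+1) a = 0 := by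
    simpa only [hiso h a ha, ← hagree a ha] using hh i a
  obtain rfl : α = 1 := eq_one_of_sub_smul_eq_zero hfa hfa_sub
  exact ⟨h, fun n x => by simpa only [one_smul] using hh n x⟩

/-- Homotopy isolation: let `f, g : C → D` be chain maps with `f` chain homotopic
to `α • g` for a scalar `α`.  If `A` is a homotopically isolated direct summand of
`C^{i+1}` (every degree-zero homotopy has `(dh + hd)|_A = 0`), `f` and `g` agree
and are nonzero on `A`, and scalars act without torsion on the target, then `f`
is chain homotopic to `g`. -/
theorem homotopy_isolation
    (R : Type) [CommRing R] (C D : ℤ → Type)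
    [∀ n, AddCommGroup (C n)] [∀ n, Module R (C n)]
    [∀ n, AddCommGroup (D n)] [∀ n, Module R (D n)]
    (dC : ∀ n, C n →ₗ[R] C (n+1)) (dD : ∀ n, D n →ₗ[R] D (n+1))
    (hddC : ∀ n (x : C n), dC (n+1) (dC n x) = 0)
    (hddD : ∀ n (x : D n), dD (n+1) (dD n x) = 0)
    (f g : ∀ n, C n →ₗ[R] D n)
    (hfc : ∀ n (x : C n), f (n+1) (dC n x) = dD n (f n x))
    (hgc : ∀ n (x : C n), g (n+1) (dC n x) = dD n (g n x))
    (α : R) (i : ℤ) (A : Submodule R (C (i+1)))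
    [NoZeroSMulDivisors R (D (i+1))]
    -- A is homotopically isolated
    (hiso : ∀ (h : ∀ n, C (n+1) →ₗ[R] D n), ∀ a ∈ A,
      dD i (h i a) + h (i+1) (dC (i+1) a) = 0)
    -- f and g agree and are nonzero on A
    (hagree : ∀ a ∈ A, f (i+1) a = g (i+1) a)
    (hnonzero : ∃ a ∈ A, f (i+1) a ≠ 0)
    -- f is chain homotopic to α • g
    (hhom : ∃ h : ∀ n, C (n+1) →ₗ[R] D n, ∀ n (x : C (n+1)),
      f (n+1) x - α • g (n+1) x = dD n (h n x) + h (n+1) (dC (n+1) x)) :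
    -- then f is chain homotopic to g
    ∃ h : ∀ n, C (n+1) →ₗ[R] D n, ∀ n (x : C (n+1)),
      f (n+1) x - g (n+1) x = dD n (h n x) + h (n+1) (dC (n+1) x) :=
  homotopy_isolation_general R C D dC dD f g α i A hiso hagree hnonzero hhom
end
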